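/- arXiv:1801.01216 — 6 statements merged into one kernel-verified Lean document; each statement's English description precedes it below -/
import Mathlib

section
/- Let A be a unital C*-algebra and let a, b be elements of A with 0 ≤ a ≤ 1 and 0 ≤ b ≤ 1. If a*b = b*a = 0 (a and b are orthogonal), then |a - b| + |1 - a - b| = 1, i.e., a is absolutely compatible with b. -/
/-!
For orthogonal positive `a`, `b` we have `(a - b)^2 = a^2 + b^2 = (a + b)^2`, so `|a - b| = a + b`.
Orthogonality also gives `‖a + b‖ = max ‖a‖ ‖b‖ ≤ 1`, hence `0 ≤ 1 - a - b` and `|1 - a - b| = 1 - a - b`.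
-/

/-- The absolute value `|x| = (x* x)^(1/2)` in a C*-algebra. -/
noncomputable def cstarAbs {A : Type*} [CStarAlgebra A] [PartialOrder A] [StarOrderedRing A]
    (x : A) : A := CFC.sqrt (star x * x)

lemma sub_sq_eq_add_sq_of_mul_eq_zero {R : Type*} [Ring R] {a b : R}
    (hab : a * b = 0) (hba : b * a = 0) : (a - b) ^ 2 = (a + b) ^ 2 := by
  simp only [sq, sub_mul, mul_sub, add_mul, mul_add, hab, hba]
  abel

section

variable {A : Type*} [CStarAlgebra A] [PartialOrder A] [StarOrderedRing A]

lemma cstarAbs_eq_cfcAbs (x : A) : cstarAbs x = CFC.abs x := rfl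

lemma cstarAbs_sub_of_nonneg_of_mul_eq_zero {a b : A} (ha : 0 ≤ a) (hb : 0 ≤ b)
    (hab : a * b = 0) : cstarAbs (a - b) = a + b := by
  have hasa : IsSelfAdjoint a := .of_nonneg ha
  have hbsa : IsSelfAdjoint b := .of_nonneg hb
  have hba : b * a = 0 := (hasa.commute_of_mul_eq_zero hbsa hab).eq ▸ hab
  have hsq : (a - b) ^ 2 = (a + b) ^ 2 := sub_sq_eq_add_sq_of_mul_eq_zero hab hba
  rw [cstarAbs, (hasa.sub hbsa).star_eq, ← sq, hsq, CFC.sqrt_sq (a + b) (add_nonneg ha hb)]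

lemma add_le_one_of_mul_eq_zero {a b : A} (ha0 : 0 ≤ a) (ha1 : a ≤ 1) (hb0 : 0 ≤ b)
    (hb1 : b ≤ 1) (hab : a * b = 0) : a + b ≤ 1 := by
  rw [← CStarAlgebra.norm_le_one_iff_of_nonneg (a + b) (add_nonneg ha0 hb0),
    (IsSelfAdjoint.of_nonneg ha0).norm_add_eq_max (.of_nonneg hb0) hab]
  exact max_le ((CStarAlgebra.norm_le_one_iff_of_nonneg a ha0).2 ha1)
    ((CStarAlgebra.norm_le_one_iff_of_nonneg b hb0).2 hb1)

end

theorem stmt0_general {A : Type*} [CStarAlgebra A] [PartialOrder A] [StarOrderedRing A]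
    (a b : A) (ha0 : 0 ≤ a) (ha1 : a ≤ 1) (hb0 : 0 ≤ b) (hb1 : b ≤ 1)
    (hab : a * b = 0) :
    cstarAbs (a - b) + cstarAbs (1 - a - b) = 1 := by
  have hsum : 0 ≤ 1 - a - b := by
    rw [sub_sub, sub_nonneg]
    exact add_le_one_of_mul_eq_zero ha0 ha1 hb0 hb1 hab
  rw [cstarAbs_sub_of_nonneg_of_mul_eq_zero ha0 hb0 hab, cstarAbs_eq_cfcAbs,
    CFC.abs_of_nonneg _ hsum]
  abel

/-- Orthogonal positive contractions in a unital C*-algebra are absolutely compatible. -/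
theorem stmt0 {A : Type*} [CStarAlgebra A] [PartialOrder A] [StarOrderedRing A]
    (a b : A) (ha0 : 0 ≤ a) (ha1 : a ≤ 1) (hb0 : 0 ≤ b) (hb1 : b ≤ 1)
    (hab : a * b = 0) (hba : b * a = 0) :
    cstarAbs (a - b) + cstarAbs (1 - a - b) = 1 :=
  stmt0_general a b ha0 ha1 hb0 hb1 hab
end

section
/- Let A be a unital C*-algebra and let a, b ∈ A with 0 ≤ a, b ≤ 1. Then a is absolutely compatible with b if and only if a∘b ≥ 0, (1-a)∘(1-b) ≥ 0, and (a∘b)·((1-a)∘(1-b)) = 0. -/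
lemma eq_of_add_self_eq {M : Type*} [AddCommGroup M] [Module ℂ M] {u v : M}
    (h : u + u = v + v) : u = v :=
  smul_right_injective M (two_ne_zero' ℂ) (by simpa only [two_smul] using h)

section JordanProduct

variable {R : Type*} [Ring R] [Algebra ℂ R]

noncomputable def jordanMul (a b : R) : R := (2 : ℂ)⁻¹ • (a * b + b * a)

lemma jordanMul_add_self (a b : R) : jordanMul a b + jordanMul a b = a * b + b * a := by
  rw [jordanMul, ← two_smul ℂ, smul_smul, mul_inv_cancel₀ two_ne_zero, one_smul]

lemma jordanMul_one_sub_one_sub_sub (a b : R) :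
    jordanMul (1 - a) (1 - b) - jordanMul a b = 1 - a - b :=
  eq_of_add_self_eq <| by
    rw [sub_add_sub_comm, jordanMul_add_self, jordanMul_add_self]; noncomm_ring

lemma sub_mul_sub_eq_one_sub_jordanMul (a b : R) :
    (a - b) * (a - b) = 1 - ((jordanMul a b + jordanMul (1 - a) (1 - b)) +
      (jordanMul a b + jordanMul (1 - a) (1 - b))) + (1 - a - b) * (1 - a - b) := by
  rw [add_add_add_comm, jordanMul_add_self, jordanMul_add_self]; noncomm_ring

end JordanProduct

namespace CFC

variable {A : Type*} [CStarAlgebra A] [PartialOrder A] [StarOrderedRing A]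

lemma abs_eq_iff {p w : A} : abs p = w ↔ 0 ≤ w ∧ w * w = star p * p :=
  ⟨fun h => h ▸ ⟨abs_nonneg p, abs_mul_abs p⟩, fun ⟨hw, h⟩ => sqrt_unique h hw⟩

lemma abs_le_one {q : A} (h₀ : -1 ≤ q) (h₁ : q ≤ 1) : abs q ≤ 1 := by
  have hq : IsSelfAdjoint q := .of_ge h₀ (.neg (.one A))
  rw [abs_eq_cfc_norm q]
  refine cfc_le_one _ q fun r hr => abs_le.mpr ⟨?_, ?_⟩
  · exact (algebraMap_le_iff_le_spectrum (r := -1) hq).mp (by simpa using h₀) r hr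
  · exact (le_algebraMap_iff_spectrum_le (r := 1) hq).mp (by simpa using h₁) r hr

lemma abs_eq_add_iff {q x y : A} (hq : IsSelfAdjoint q) (hxy : y - x = q) :
    abs q = x + y ↔ 0 ≤ x ∧ 0 ≤ y ∧ x * y = 0 := by
  constructor
  · intro h
    have hx : x = q⁻ := eq_of_add_self_eq <| by
      rw [← two_nsmul q⁻, ← abs_sub_self q, h, ← hxy]; abel
    have hy : y = q⁺ := eq_of_add_self_eq <| by
      rw [← two_nsmul q⁺, ← abs_add_self q, h, ← hxy]; abel
    rw [hx, hy]
    exact ⟨negPart_nonneg q, posPart_nonneg q, negPart_mul_posPart q⟩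
  · rintro ⟨hx, hy, h⟩
    have hyx : y * x = 0 := by
      simpa only [star_mul, star_zero, (IsSelfAdjoint.of_nonneg hx).star_eq,
        (IsSelfAdjoint.of_nonneg hy).star_eq] using congrArg star h
    obtain ⟨hpos, hneg⟩ := posPart_negPart_unique hxy.symm hyx
    rw [← CFC.posPart_add_negPart q, hpos, hneg, add_comm]

lemma abs_add_abs_eq_one_iff {p q w : A} (hp : IsSelfAdjoint p) (h₀ : -1 ≤ q) (h₁ : q ≤ 1)
    (hpq : p * p = 1 - (w + w) + q * q) : abs p + abs q = 1 ↔ abs q = w := by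
  have hq : IsSelfAdjoint q := .of_ge h₀ (.neg (.one A))
  have hsq : ∀ v : A, (1 - v) * (1 - v) = 1 - (v + v) + v * v := fun v => by noncomm_ring
  constructor
  · intro h
    have hp' := abs_mul_abs p
    rw [eq_sub_of_add_eq h, hsq, abs_mul_abs, hp.star_eq, hq.star_eq, hpq] at hp'
    exact eq_of_add_self_eq (sub_right_inj.mp (add_right_cancel hp'))
  · intro h
    rw [← eq_sub_iff_add_eq]
    refine abs_eq_iff.mpr ⟨sub_nonneg.mpr (abs_le_one h₀ h₁), ?_⟩
    rw [hsq, abs_mul_abs, hp.star_eq, hq.star_eq, hpq, h]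

end CFC

/-- For `0 ≤ a, b ≤ 1` in a unital C*-algebra, `a` is absolutely compatible with `b`
iff `a ∘ b ≥ 0`, `(1-a) ∘ (1-b) ≥ 0` and `(a ∘ b) ((1-a) ∘ (1-b)) = 0`. -/
theorem stmt2 {A : Type*} [CStarAlgebra A] [PartialOrder A] [StarOrderedRing A]
    (a b : A) (ha0 : 0 ≤ a) (ha1 : a ≤ 1) (hb0 : 0 ≤ b) (hb1 : b ≤ 1) :
    cstarAbs (a - b) + cstarAbs (1 - a - b) = 1 ↔
      (0 ≤ (2 : ℂ)⁻¹ • (a * b + b * a) ∧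
        0 ≤ (2 : ℂ)⁻¹ • ((1 - a) * (1 - b) + (1 - b) * (1 - a)) ∧
        ((2 : ℂ)⁻¹ • (a * b + b * a)) *
          ((2 : ℂ)⁻¹ • ((1 - a) * (1 - b) + (1 - b) * (1 - a))) = 0) := by
  show CFC.abs (a - b) + CFC.abs (1 - a - b) = 1 ↔ 0 ≤ jordanMul a b ∧
    0 ≤ jordanMul (1 - a) (1 - b) ∧ jordanMul a b * jordanMul (1 - a) (1 - b) = 0
  have ha : IsSelfAdjoint a := .of_nonneg ha0
  have hb : IsSelfAdjoint b := .of_nonneg hb0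
  have hq₀ : -1 ≤ 1 - a - b :=
    calc -1 = (0 : A) - 1 := (zero_sub 1).symm
      _ ≤ 1 - a - b := sub_le_sub (sub_nonneg.mpr ha1) hb1
  have hq₁ : 1 - a - b ≤ 1 := by
    rw [sub_sub]; exact sub_le_self 1 (add_nonneg ha0 hb0)
  exact (CFC.abs_add_abs_eq_one_iff (ha.sub hb) hq₀ hq₁
    (sub_mul_sub_eq_one_sub_jordanMul a b)).trans
    (CFC.abs_eq_add_iff (.of_ge hq₀ (.neg (.one A))) (jordanMul_one_sub_one_sub_sub a b))
end

section
/- Two positive functions a, b in the closed unit ball of C(K), for K a compact Hausdorff space, are absolutely compatible (i.e., |a-b| + |1-a-b| = 1) if and only if a(t)·b(t) = 0 for every t ∈ K with both a(t) ∈ [0,1) and b(t) ∈ [0,1). -/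
/-!
Writing `u = a(t) - b(t)` and `v = 1 - a(t) - b(t)`, the identity `|u| + |v| = max |u + v| |u - v|`
turns the compatibility condition at `t` into `max |2 a(t) - 1| |2 b(t) - 1| = 1`. For values in
`[0, 1]` this says exactly that one of `a(t)`, `b(t)` lies in `{0, 1}`, which is also what the
second condition says at `t`.
-/

open Set

section OrderedGroup

variable {α : Type*} [AddCommGroup α] [LinearOrder α] [IsOrderedAddMonoid α]

theorem abs_add_abs_eq_max_abs_add_abs_sub (a b : α) : |a| + |b| = max |a + b| |a - b| := by
  rcases le_total 0 a with ha | ha <;> rcases le_total 0 b with hb | hb <;>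
    simp only [abs_of_nonneg, abs_of_nonpos, ha, hb] <;>
    grind

end OrderedGroup

section OrderedField

variable {𝕜 : Type*} [Field 𝕜] [LinearOrder 𝕜] [IsStrictOrderedRing 𝕜] {x y : 𝕜}

theorem abs_two_mul_sub_one_le_one (hx : x ∈ Icc 0 1) : |2 * x - 1| ≤ 1 := by
  rw [abs_le]
  constructor <;> linarith [hx.1, hx.2]

theorem abs_two_mul_sub_one_eq_one_iff : |2 * x - 1| = 1 ↔ x = 0 ∨ x = 1 := by
  rw [abs_eq zero_le_one]
  constructor
  · rintro (h | h)
    · right; linarith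
    · left; linarith
  · rintro (rfl | rfl) <;> norm_num

theorem abs_sub_add_abs_one_sub_sub_eq_one_iff (hx : x ∈ Icc 0 1) (hy : y ∈ Icc 0 1) :
    |x - y| + |1 - x - y| = 1 ↔ x = 0 ∨ x = 1 ∨ y = 0 ∨ y = 1 := by
  have hmax : |x - y| + |1 - x - y| = max |2 * x - 1| |2 * y - 1| := by
    rw [abs_add_abs_eq_max_abs_add_abs_sub, max_comm, ← abs_neg (x - y + _)]
    congr 2 <;> ring
  have hx1 := abs_two_mul_sub_one_le_one hx
  have hy1 := abs_two_mul_sub_one_le_one hy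
  rw [hmax, ← (max_le hx1 hy1).ge_iff_eq, le_max_iff, hx1.ge_iff_eq, hy1.ge_iff_eq,
    abs_two_mul_sub_one_eq_one_iff, abs_two_mul_sub_one_eq_one_iff, or_assoc]

theorem imp_imp_mul_eq_zero_iff (hx : x ≤ 1) (hy : y ≤ 1) :
    (x < 1 → y < 1 → x * y = 0) ↔ x = 0 ∨ x = 1 ∨ y = 0 ∨ y = 1 := by
  constructor
  · intro h
    rcases hx.lt_or_eq with hx | hx
    · rcases hy.lt_or_eq with hy | hy
      · rcases mul_eq_zero.mp (h hx hy) with h | h <;> simp [h]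
      · simp [hy]
    · simp [hx]
  · rintro (rfl | rfl | rfl | rfl) <;> simp

end OrderedField

theorem stmt4_general {K : Type*} [TopologicalSpace K]
    (a b : C(K, ℝ)) (ha0 : 0 ≤ a) (ha1 : a ≤ 1) (hb0 : 0 ≤ b) (hb1 : b ≤ 1) :
    (∀ t : K, |a t - b t| + |1 - a t - b t| = 1) ↔
      (∀ t : K, a t < 1 → b t < 1 → a t * b t = 0) :=
  forall_congr' fun t =>
    (abs_sub_add_abs_one_sub_sub_eq_one_iff ⟨ha0 t, ha1 t⟩ ⟨hb0 t, hb1 t⟩).trans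
      (imp_imp_mul_eq_zero_iff (ha1 t) (hb1 t)).symm

/-- Two positive functions in the closed unit ball of `C(K)` are absolutely compatible
iff `a(t) b(t) = 0` whenever both `a(t), b(t) ∈ [0,1)`. -/
theorem stmt4 {K : Type*} [TopologicalSpace K] [CompactSpace K] [T2Space K]
    (a b : C(K, ℝ)) (ha0 : 0 ≤ a) (ha1 : a ≤ 1) (hb0 : 0 ≤ b) (hb1 : b ≤ 1) :
    (∀ t : K, |a t - b t| + |1 - a t - b t| = 1) ↔
      (∀ t : K, a t < 1 → b t < 1 → a t * b t = 0) :=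
  stmt4_general a b ha0 ha1 hb0 hb1
end

section
/- Let a, b be 2×2 positive semidefinite complex matrices with a ≤ 1 and b ≤ 1, both strict (i.e., with all eigenvalues in the open interval (0,1)). If a and b are absolutely compatible and ab ≠ ba, then det(a) > 0, det(b) > 0, trace(a) = trace(b) = 1, and det(a∘b) = 0, where a∘b = (ab+ba)/2. -/
open Matrix
open scoped ComplexOrder

/-- The absolute value `|x| = (x* x)^(1/2)` of a complex matrix. -/
noncomputable def matAbs {n : Type*} [Fintype n] [DecidableEq n] (x : Matrix n n ℂ) :
    Matrix n n ℂ :=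
  (Matrix.posSemidef_conjTranspose_mul_self x).1.eigenvectorUnitary.1 *
    diagonal ((↑) ∘ (√·) ∘ (Matrix.posSemidef_conjTranspose_mul_self x).1.eigenvalues) *
    (star (Matrix.posSemidef_conjTranspose_mul_self x).1.eigenvectorUnitary : Matrix n n ℂ)

/-!
Write `c = ab + ba`. Absolute compatibility of the Hermitian matrices `a, b` forces
`|a - b| = a + b - c`, hence `(a + b - c)² = (a - b)²`. In `M₂` every product `xy + yx` is a
combination of `x`, `y` and `1` (polarized Cayley–Hamilton), so this identity becomes a linear
relation between `a`, `b` and `1`; as `a, b` do not commute, its coefficients vanish. With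
`tr(ab) > 0` this gives `tr a = tr b` and `(tr a - 1)(tr(ab) - tr a) = 0`, and the second factor
would make the positive semidefinite `|a - b|` traceless, hence zero. Once `tr a = tr b = 1`,
the identity collapses to `c² = tr(c) c`, i.e. `det c = 0` by Cayley–Hamilton.
-/

open scoped MatrixOrder

theorem eq_zero_of_smul_add_smul_eq_smul_one {K A : Type*} [Field K] [Ring A] [Algebra K A]
    {a b : A} (hab : a * b ≠ b * a) {s t r : K} (h : s • a + t • b = r • 1) :
    s = 0 ∧ t = 0 := by
  have hcomm : ∀ x : A, x * (s • a + t • b) = (s • a + t • b) * x := fun x ↦ by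
    rw [h, Algebra.smul_def, mul_one]
    exact (Algebra.commutes r x).symm
  have hs : s • (b * a - a * b) = 0 := by
    have := hcomm b
    simp only [mul_add, add_mul, mul_smul_comm, smul_mul_assoc] at this
    linear_combination (norm := module) this
  have ht : t • (a * b - b * a) = 0 := by
    have := hcomm a
    simp only [mul_add, add_mul, mul_smul_comm, smul_mul_assoc] at this
    linear_combination (norm := module) this
  exact ⟨(smul_eq_zero.mp hs).resolve_right (sub_ne_zero.mpr hab.symm),
    (smul_eq_zero.mp ht).resolve_right (sub_ne_zero.mpr hab)⟩

theorem mul_add_mul_swap_sq_eq_of_sq_eq {A : Type*} [Ring A] {a b : A}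
    (h : (a + b - (a * b + b * a)) ^ 2 = (a - b) ^ 2) :
    (a * b + b * a) * (a * b + b * a) + ((a * b + b * a) + (a * b + b * a)) =
      (a + b) * (a * b + b * a) + (a * b + b * a) * (a + b) := by
  rw [← sub_eq_zero, ← sub_eq_zero.mpr h]
  noncomm_ring

section MatAbs

variable {n : Type*} [Fintype n] [DecidableEq n]

theorem matAbs_eq_cfcAbs (x : Matrix n n ℂ) : matAbs x = CFC.abs x := by
  have hx := posSemidef_conjTranspose_mul_self x
  rw [CFC.abs, star_eq_conjTranspose, CFC.sqrt_eq_real_sqrt _ hx.nonneg, cfcₙ_eq_cfc,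
    hx.1.cfc_eq, IsHermitian.cfc, Unitary.conjStarAlgAut_apply]
  rfl

theorem matAbs_mul_self (x : Matrix n n ℂ) : matAbs x * matAbs x = xᴴ * x := by
  rw [matAbs_eq_cfcAbs, CFC.abs_mul_abs, star_eq_conjTranspose]

theorem posSemidef_matAbs (x : Matrix n n ℂ) : (matAbs x).PosSemidef := by
  rw [matAbs_eq_cfcAbs]
  exact (CFC.abs_nonneg x).posSemidef

theorem matAbs_sub_eq_of_absCompat {a b : Matrix n n ℂ} (ha : a.IsHermitian)
    (hb : b.IsHermitian) (h : matAbs (a - b) + matAbs (1 - a - b) = 1) :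
    matAbs (a - b) = a + b - (a * b + b * a) := by
  set P := matAbs (a - b)
  have hP : P * P = (a - b) * (a - b) := by rw [matAbs_mul_self, (ha.sub hb).eq]
  have hQ : (1 - P) * (1 - P) = (1 - a - b) * (1 - a - b) := by
    rw [← eq_sub_of_add_eq' h, matAbs_mul_self, ((isHermitian_one.sub ha).sub hb).eq]
  refine smul_right_injective _ (two_ne_zero (α := ℂ)) ?_
  calc (2 : ℂ) • P = 1 + P * P - (1 - P) * (1 - P) := by rw [two_smul]; noncomm_ring
    _ = 1 + (a - b) * (a - b) - (1 - a - b) * (1 - a - b) := by rw [hP, hQ]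
    _ = (2 : ℂ) • (a + b - (a * b + b * a)) := by rw [two_smul]; noncomm_ring

theorem sq_eq_of_absCompat {a b : Matrix n n ℂ} (ha : a.IsHermitian) (hb : b.IsHermitian)
    (h : matAbs (a - b) + matAbs (1 - a - b) = 1) :
    (a + b - (a * b + b * a)) ^ 2 = (a - b) ^ 2 := by
  rw [← matAbs_sub_eq_of_absCompat ha hb h, sq, sq, matAbs_mul_self, (ha.sub hb).eq]

end MatAbs

namespace Matrix

theorem PosDef.trace_mul_pos {n 𝕜 : Type*} [Fintype n] [DecidableEq n] [Nonempty n] [RCLike 𝕜]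
    {a b : Matrix n n 𝕜} (ha : a.PosDef) (hb : b.PosDef) : 0 < (a * b).trace := by
  have hr : (CFC.sqrt a).PosDef := (IsStrictlyPositive.sqrt a ha.isStrictlyPositive).posDef
  have hrb : ((CFC.sqrt a)ᴴ * b * CFC.sqrt a).PosDef :=
    hb.conjTranspose_mul_mul_same (mulVec_injective_iff_isUnit.mpr hr.isUnit)
  rw [← CFC.sqrt_mul_sqrt_self a ha.posSemidef.nonneg, Matrix.mul_assoc, trace_mul_comm,
    Matrix.mul_assoc]
  simpa [hr.isHermitian.eq, Matrix.mul_assoc] using hrb.trace_pos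

theorem trace_mul_add_mul_swap {n R : Type*} [Fintype n] [CommRing R] (x y : Matrix n n R) :
    (x * y + y * x).trace = 2 * (x * y).trace := by
  rw [trace_add, trace_mul_comm y x, two_mul]

section FinTwo

variable {R : Type*} [CommRing R]

theorem mul_self_fin_two (m : Matrix (Fin 2) (Fin 2) R) :
    m * m = m.trace • m - m.det • 1 := by
  ext i j
  fin_cases i <;> fin_cases j <;> simp [mul_apply, trace_fin_two, det_fin_two] <;> ring

theorem mul_add_mul_swap_fin_two (x y : Matrix (Fin 2) (Fin 2) R) :
    x * y + y * x = x.trace • y + y.trace • x + ((x * y).trace - x.trace * y.trace) • 1 := by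
  ext i j
  fin_cases i <;> fin_cases j <;> simp [mul_apply, trace_fin_two] <;> ring

variable {K : Type*} [Field K] {a b : Matrix (Fin 2) (Fin 2) K}

theorem trace_relations_of_sq_eq_fin_two (hab : a * b ≠ b * a)
    (h : (a + b - (a * b + b * a)) ^ 2 = (a - b) ^ 2) :
    (2 * (a * b).trace + 2 - a.trace - b.trace) * b.trace = 2 * (a * b).trace ∧
      (2 * (a * b).trace + 2 - a.trace - b.trace) * a.trace = 2 * (a * b).trace := by
  have hJ := mul_add_mul_swap_sq_eq_of_sq_eq h
  have hc := mul_add_mul_swap_fin_two a b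
  have hsc := mul_add_mul_swap_fin_two (a + b) (a * b + b * a)
  have hcc := mul_self_fin_two (a * b + b * a)
  rw [trace_add, trace_mul_add_mul_swap] at hsc
  rw [trace_mul_add_mul_swap] at hcc
  set c := a * b + b * a
  set τ := (a * b).trace
  set α := a.trace
  set β := b.trace
  have key : ((2 * τ + 2 - α - β) * β - 2 * τ) • a + ((2 * τ + 2 - α - β) * α - 2 * τ) • b =
      (c.det + ((a + b) * c).trace - (α + β) * (2 * τ) - (2 * τ + 2 - α - β) * (τ - α * β)) •
        1 := by
    linear_combination (norm := module) hJ - hcc + hsc - (2 * τ + 2 - α - β) • hc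
  obtain ⟨hβ, hα⟩ := eq_zero_of_smul_add_smul_eq_smul_one hab key
  exact ⟨sub_eq_zero.mp hβ, sub_eq_zero.mp hα⟩

theorem det_mul_add_mul_swap_eq_zero_fin_two (h : (a + b - (a * b + b * a)) ^ 2 = (a - b) ^ 2)
    (ha : a.trace = 1) (hb : b.trace = 1) : (a * b + b * a).det = 0 := by
  have hJ := mul_add_mul_swap_sq_eq_of_sq_eq h
  have hc := mul_add_mul_swap_fin_two a b
  have hcc := mul_self_fin_two (a * b + b * a)
  rw [trace_mul_add_mul_swap] at hcc
  rw [ha, hb] at hc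
  set c := a * b + b * a
  set τ := (a * b).trace
  have hs : a + b = c - (τ - 1) • 1 := by rw [hc]; module
  rw [hs] at hJ
  simp only [sub_mul, mul_sub, smul_mul_assoc, mul_smul_comm, one_mul, mul_one] at hJ
  have : c.det • (1 : Matrix (Fin 2) (Fin 2) K) = 0 := by
    linear_combination (norm := module) hJ + hcc
  exact (smul_eq_zero.mp this).resolve_right one_ne_zero

end FinTwo

end Matrix

theorem trace_eq_one_of_absCompat_fin_two {a b : Matrix (Fin 2) (Fin 2) ℂ} (ha : a.PosDef)
    (hb : b.PosDef) (hAC : matAbs (a - b) + matAbs (1 - a - b) = 1) (hcomm : a * b ≠ b * a) :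
    a.trace = 1 ∧ b.trace = 1 := by
  have hP := matAbs_sub_eq_of_absCompat ha.1 hb.1 hAC
  obtain ⟨hkβ, hkα⟩ := trace_relations_of_sq_eq_fin_two hcomm (sq_eq_of_absCompat ha.1 hb.1 hAC)
  have hτ : (a * b).trace ≠ 0 := (ha.trace_mul_pos hb).ne'
  have hk : 2 * (a * b).trace + 2 - a.trace - b.trace ≠ 0 := fun h0 ↦
    hτ (by linear_combination -hkα / 2 + a.trace / 2 * h0)
  have hαβ : a.trace = b.trace := mul_left_cancel₀ hk (hkα.trans hkβ.symm)
  suffices hα : a.trace = 1 from ⟨hα, hαβ ▸ hα⟩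
  have : (a.trace - 1) * ((a * b).trace - a.trace) = 0 := by
    linear_combination hkα / 2 - a.trace / 2 * hαβ
  refine (mul_eq_zero.mp this).elim sub_eq_zero.mp fun hτα ↦ ?_
  have hP0 : matAbs (a - b) = 0 := (posSemidef_matAbs _).trace_eq_zero_iff.mp <| by
    rw [hP, trace_sub, trace_add, trace_mul_add_mul_swap]
    linear_combination -hαβ - 2 * hτα
  have : (1 - b.trace) • a + (1 - a.trace) • b = ((a * b).trace - a.trace * b.trace) • 1 := by
    linear_combination (norm := module) mul_add_mul_swap_fin_two a b - hP0.symm.trans hP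
  exact (sub_eq_zero.mp (eq_zero_of_smul_add_smul_eq_smul_one hcomm this).2).symm

theorem stmt13_general (a b : Matrix (Fin 2) (Fin 2) ℂ)
    (ha : a.PosDef) (hb : b.PosDef)
    (hAC : matAbs (a - b) + matAbs (1 - a - b) = 1)
    (hcomm : a * b ≠ b * a) :
    (0 < a.det.re ∧ a.det.im = 0) ∧ (0 < b.det.re ∧ b.det.im = 0) ∧
      a.trace = 1 ∧ b.trace = 1 ∧ ((2 : ℂ)⁻¹ • (a * b + b * a)).det = 0 := by
  obtain ⟨hα, hβ⟩ := trace_eq_one_of_absCompat_fin_two ha hb hAC hcomm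
  have hJ := sq_eq_of_absCompat ha.1 hb.1 hAC
  have hdet {x : Matrix (Fin 2) (Fin 2) ℂ} (hx : x.PosDef) : 0 < x.det.re ∧ x.det.im = 0 :=
    (Complex.pos_iff.mp hx.det_pos).imp_right Eq.symm
  refine ⟨hdet ha, hdet hb, hα, hβ, ?_⟩
  rw [det_smul, det_mul_add_mul_swap_eq_zero_fin_two hJ hα hβ, mul_zero]

/-- If `a, b` are strict positive contractions in `M₂(ℂ)` (all eigenvalues in `(0,1)`,
i.e. `a, 1-a, b, 1-b` positive definite) which are absolutely compatible and do not
commute, then `det a > 0`, `det b > 0`, `trace a = trace b = 1` and `det (a ∘ b) = 0`. -/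
theorem stmt13 (a b : Matrix (Fin 2) (Fin 2) ℂ)
    (ha : a.PosDef) (ha1 : (1 - a).PosDef) (hb : b.PosDef) (hb1 : (1 - b).PosDef)
    (hAC : matAbs (a - b) + matAbs (1 - a - b) = 1)
    (hcomm : a * b ≠ b * a) :
    (0 < a.det.re ∧ a.det.im = 0) ∧ (0 < b.det.re ∧ b.det.im = 0) ∧
      a.trace = 1 ∧ b.trace = 1 ∧ ((2 : ℂ)⁻¹ • (a * b + b * a)).det = 0 :=
  stmt13_general a b ha hb hAC hcomm
end

section
/- Let a, b be 2×2 positive semidefinite complex matrices with 0 ≤ a, b ≤ 1 such that det(a) > 0, det(b) > 0, trace(a) = trace(b) = 1, and det(a∘b) = 0, where a∘b = (ab+ba)/2. Then a and b are absolutely compatible, i.e., |a-b| + |1-a-b| = 1. -/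
open Matrix
open scoped ComplexOrder

lemma matAbs_eq_cfc_sqrt {n : Type*} [Fintype n] [DecidableEq n] (x : Matrix n n ℂ) :
    matAbs x = cfc Real.sqrt (xᴴ * x) := by
  rw [(posSemidef_conjTranspose_mul_self x).1.cfc_eq, IsHermitian.cfc,
    Unitary.conjStarAlgAut_apply]
  rfl

lemma matAbs_eq_sqrt_smul_one {n : Type*} [Fintype n] [DecidableEq n] {x : Matrix n n ℂ} {r : ℝ}
    (h : xᴴ * x = (r : ℂ) • 1) : matAbs x = (√r : ℂ) • 1 := by
  have hscalar (s : ℝ) : (s : ℂ) • (1 : Matrix n n ℂ) = algebraMap ℝ _ s := by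
    rw [Algebra.algebraMap_eq_smul_one, Complex.coe_smul]
  rw [matAbs_eq_cfc_sqrt, h, hscalar, cfc_algebraMap, hscalar]

section FinTwo
variable {R : Type*} [CommRing R]

lemma mul_self_eq_neg_det_smul_one_of_trace_eq_zero {c : Matrix (Fin 2) (Fin 2) R}
    (h : c.trace = 0) : c * c = (-c.det) • 1 := by
  have h11 : c 1 1 = -c 0 0 := by rw [trace_fin_two] at h; linear_combination h
  ext i j
  fin_cases i <;> fin_cases j <;> simp [mul_apply, det_fin_two, h11] <;> ring

lemma apply_one_one_eq_one_sub_of_trace_eq_one {a : Matrix (Fin 2) (Fin 2) R}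
    (ha : a.trace = 1) : a 1 1 = 1 - a 0 0 := by
  rw [trace_fin_two] at ha; linear_combination ha

variable {a b : Matrix (Fin 2) (Fin 2) R}

lemma det_sub_of_trace_eq_one (ha : a.trace = 1) (hb : b.trace = 1) :
    (a - b).det = a.det + b.det - 1 + (a * b).trace := by
  simp [det_fin_two, trace_fin_two, mul_apply, apply_one_one_eq_one_sub_of_trace_eq_one ha,
    apply_one_one_eq_one_sub_of_trace_eq_one hb]
  ring

lemma det_one_sub_sub_of_trace_eq_one (ha : a.trace = 1) (hb : b.trace = 1) :
    (1 - a - b).det = a.det + b.det - (a * b).trace := by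
  simp [det_fin_two, trace_fin_two, mul_apply, apply_one_one_eq_one_sub_of_trace_eq_one ha,
    apply_one_one_eq_one_sub_of_trace_eq_one hb]
  ring

lemma det_mul_add_mul_of_trace_eq_one (ha : a.trace = 1) (hb : b.trace = 1) :
    (a * b + b * a).det = (a * b).trace ^ 2 - (a * b).trace + a.det + b.det := by
  simp [det_fin_two, trace_fin_two, mul_apply, apply_one_one_eq_one_sub_of_trace_eq_one ha,
    apply_one_one_eq_one_sub_of_trace_eq_one hb]
  ring

end FinTwo

lemma Matrix.IsHermitian.coe_re_trace_mul {n : Type*} [Fintype n] {a b : Matrix n n ℂ}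
    (ha : a.IsHermitian) (hb : b.IsHermitian) : ((a * b).trace.re : ℂ) = (a * b).trace :=
  Complex.conj_eq_iff_re.mp <| by
    rw [← Complex.star_def, ← trace_conjTranspose, conjTranspose_mul, ha.eq, hb.eq,
      trace_mul_comm]

lemma Matrix.IsHermitian.matAbs_eq_of_trace_eq_zero {c : Matrix (Fin 2) (Fin 2) ℂ}
    (hc : c.IsHermitian) (h : c.trace = 0) : matAbs c = (√(-c.det.re) : ℂ) • 1 := by
  have hdet : (c.det.re : ℂ) = c.det :=
    Complex.conj_eq_iff_re.mp <| by rw [← Complex.star_def, ← det_conjTranspose, hc.eq]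
  apply matAbs_eq_sqrt_smul_one
  rw [hc.eq, mul_self_eq_neg_det_smul_one_of_trace_eq_zero h, Complex.ofReal_neg, hdet]

lemma sqrt_one_sub_sub_add_sqrt_sub_eq_one {s u : ℝ} (hs : 0 ≤ s) (h : u ^ 2 - u + s = 0) :
    √(1 - u - s) + √(u - s) = 1 := by
  have hu0 : 0 ≤ u := by nlinarith
  have hu1 : u ≤ 1 := by nlinarith
  have h1 : 1 - u - s = (1 - u) ^ 2 := by linear_combination -h
  have h2 : u - s = u ^ 2 := by linear_combination -h
  rw [h1, h2, Real.sqrt_sq (by linarith), Real.sqrt_sq hu0]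
  ring

theorem stmt14_general (a b : Matrix (Fin 2) (Fin 2) ℂ)
    (ha : a.PosSemidef)
    (hb : b.PosSemidef)
    (hdeta : 0 < a.det.re ∧ a.det.im = 0) (hdetb : 0 < b.det.re ∧ b.det.im = 0)
    (htra : a.trace = 1) (htrb : b.trace = 1)
    (hdet : ((2 : ℂ)⁻¹ • (a * b + b * a)).det = 0) :
    matAbs (a - b) + matAbs (1 - a - b) = 1 := by
  set s := a.det.re + b.det.re
  set u := (a * b).trace.re
  have hu : (u : ℂ) = (a * b).trace := ha.1.coe_re_trace_mul hb.1
  have hquad : u ^ 2 - u + s = 0 := by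
    rw [det_smul, det_mul_add_mul_of_trace_eq_one htra htrb, ← hu] at hdet
    have h := (mul_eq_zero.mp hdet).resolve_left (by norm_num)
    simpa [s, add_assoc, sq] using congrArg Complex.re h
  have hdiff : (a - b).trace = 0 := by rw [trace_sub, htra, htrb, sub_self]
  have hcompl : (1 - a - b).trace = 0 := by
    rw [trace_sub, trace_sub, trace_one, htra, htrb, Fintype.card_fin]; norm_num
  have hre_diff : -(a - b).det.re = 1 - u - s := by
    rw [det_sub_of_trace_eq_one htra htrb, ← hu]
    simp [s]
    ring
  have hre_compl : -(1 - a - b).det.re = u - s := by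
    rw [det_one_sub_sub_of_trace_eq_one htra htrb, ← hu]
    simp [s]
  rw [(ha.1.sub hb.1).matAbs_eq_of_trace_eq_zero hdiff,
    ((isHermitian_one.sub ha.1).sub hb.1).matAbs_eq_of_trace_eq_zero hcompl, hre_diff, hre_compl,
    ← add_smul, ← Complex.ofReal_add,
    sqrt_one_sub_sub_add_sqrt_sub_eq_one (add_pos hdeta.1 hdetb.1).le hquad, Complex.ofReal_one,
    one_smul]

/-- If `0 ≤ a, b ≤ 1` in `M₂(ℂ)` satisfy `det a > 0`, `det b > 0`,
`trace a = trace b = 1` and `det (a ∘ b) = 0`, then `a` and `b` are absolutely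
compatible. -/
theorem stmt14 (a b : Matrix (Fin 2) (Fin 2) ℂ)
    (ha : a.PosSemidef) (ha1 : (1 - a).PosSemidef)
    (hb : b.PosSemidef) (hb1 : (1 - b).PosSemidef)
    (hdeta : 0 < a.det.re ∧ a.det.im = 0) (hdetb : 0 < b.det.re ∧ b.det.im = 0)
    (htra : a.trace = 1) (htrb : b.trace = 1)
    (hdet : ((2 : ℂ)⁻¹ • (a * b + b * a)).det = 0) :
    matAbs (a - b) + matAbs (1 - a - b) = 1 :=
  stmt14_general a b ha hb hdeta hdetb htra htrb hdet
end

section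
/- Let a = [[t, α],[conj α, 1-t]] and b = [[x, y+iz],[y-iz, 1-x]] be 2×2 matrices with t, x ∈ (0,1), |α|² < t(1-t), y² + z² < x(1-x), and let ã = (t, Re α, Im α), ã' = (1-t, -Re α, -Im α), b̃ = (x, y, z) in ℝ³. Then det(a∘b) = 0 if and only if ‖b̃ - ã‖₂ + ‖b̃ - ã'‖₂ = 1, where a∘b = (ab+ba)/2 and ‖·‖₂ is the Euclidean norm. -/
open Matrix
open scoped ComplexOrder

/-!
Write `P = ‖b̃ - ã‖²` and `Q = ‖b̃ - ã'‖²`. A direct computation gives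
`16 det (a ∘ b) = (Q - P + 1)² - 4Q`, which in terms of `p = √P`, `q = √Q` factors as
`(p + q - 1)(q - p - 1)(q - p + 1)(p + q + 1)`. Since
`P + Q = 1 - 2 (x(1-x) - y² - z²) - 2 (t(1-t) - |α|²) < 1`, we have `p, q < 1` and only the first
factor can vanish.
-/

theorem det_jordan_product (t x y z : ℝ) (α : ℂ) :
    ((2 : ℂ)⁻¹ • (!![(t : ℂ), α; (starRingEnd ℂ) α, 1 - (t : ℂ)] *
        !![(x : ℂ), (y : ℂ) + (z : ℂ) * Complex.I;
           (y : ℂ) - (z : ℂ) * Complex.I, 1 - (x : ℂ)] +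
      !![(x : ℂ), (y : ℂ) + (z : ℂ) * Complex.I;
           (y : ℂ) - (z : ℂ) * Complex.I, 1 - (x : ℂ)] *
        !![(t : ℂ), α; (starRingEnd ℂ) α, 1 - (t : ℂ)])).det =
      (((((x - (1 - t)) ^ 2 + (y + α.re) ^ 2 + (z + α.im) ^ 2)
          - ((x - t) ^ 2 + (y - α.re) ^ 2 + (z - α.im) ^ 2) + 1) ^ 2
        - 4 * ((x - (1 - t)) ^ 2 + (y + α.re) ^ 2 + (z + α.im) ^ 2)) / 16 : ℝ) := by
  rw [Complex.ext_iff, Complex.ofReal_re, Complex.ofReal_im]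
  simp [det_fin_two]
  constructor <;> ring

theorem focal_sq_dist_add_lt_one {t x y z : ℝ} (α : ℂ)
    (hα : Complex.normSq α < t * (1 - t)) (hyz : y ^ 2 + z ^ 2 < x * (1 - x)) :
    ((x - t) ^ 2 + (y - α.re) ^ 2 + (z - α.im) ^ 2)
      + ((x - (1 - t)) ^ 2 + (y + α.re) ^ 2 + (z + α.im) ^ 2) < 1 := by
  have hsum : ((x - t) ^ 2 + (y - α.re) ^ 2 + (z - α.im) ^ 2)
      + ((x - (1 - t)) ^ 2 + (y + α.re) ^ 2 + (z + α.im) ^ 2)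
      = 1 - 2 * (x * (1 - x) - (y ^ 2 + z ^ 2)) - 2 * (t * (1 - t) - Complex.normSq α) := by
    rw [Complex.normSq_apply]
    ring
  linarith

theorem sqrt_add_sqrt_eq_one_iff {P Q : ℝ} (hP : 0 ≤ P) (hQ : 0 ≤ Q) (hP1 : P < 1)
    (hQ1 : Q < 1) : √P + √Q = 1 ↔ (Q - P + 1) ^ 2 = 4 * Q := by
  obtain ⟨p, hp, rfl⟩ : ∃ p, 0 ≤ p ∧ p ^ 2 = P := ⟨√P, Real.sqrt_nonneg _, Real.sq_sqrt hP⟩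
  obtain ⟨q, hq, rfl⟩ : ∃ q, 0 ≤ q ∧ q ^ 2 = Q := ⟨√Q, Real.sqrt_nonneg _, Real.sq_sqrt hQ⟩
  have hp1 : p < 1 := by nlinarith
  have hq1 : q < 1 := by nlinarith
  have hfactor : (q ^ 2 - p ^ 2 + 1) ^ 2 - 4 * q ^ 2
      = (p + q - 1) * ((q - p - 1) * ((q - p + 1) * (p + q + 1))) := by ring
  rw [Real.sqrt_sq hp, Real.sqrt_sq hq, ← sub_eq_zero (b := 4 * q ^ 2), hfactor,
    ← sub_eq_zero (a := p + q)]
  refine ⟨fun h => by rw [h, zero_mul], fun h => ?_⟩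
  exact (mul_eq_zero.mp h).resolve_right
    (mul_ne_zero (by linarith) (mul_ne_zero (by linarith) (by linarith)))

theorem stmt18_general (t x y z : ℝ) (α : ℂ)
    (hα : Complex.normSq α < t * (1 - t)) (hyz : y ^ 2 + z ^ 2 < x * (1 - x)) :
    (((2 : ℂ)⁻¹ • (!![(t : ℂ), α; (starRingEnd ℂ) α, 1 - (t : ℂ)] *
        !![(x : ℂ), (y : ℂ) + (z : ℂ) * Complex.I;
           (y : ℂ) - (z : ℂ) * Complex.I, 1 - (x : ℂ)] +
      !![(x : ℂ), (y : ℂ) + (z : ℂ) * Complex.I;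
           (y : ℂ) - (z : ℂ) * Complex.I, 1 - (x : ℂ)] *
        !![(t : ℂ), α; (starRingEnd ℂ) α, 1 - (t : ℂ)])).det = 0) ↔
      Real.sqrt ((x - t) ^ 2 + (y - α.re) ^ 2 + (z - α.im) ^ 2) +
        Real.sqrt ((x - (1 - t)) ^ 2 + (y + α.re) ^ 2 + (z + α.im) ^ 2) = 1 := by
  have hsum := focal_sq_dist_add_lt_one α hα hyz
  set P := (x - t) ^ 2 + (y - α.re) ^ 2 + (z - α.im) ^ 2
  set Q := (x - (1 - t)) ^ 2 + (y + α.re) ^ 2 + (z + α.im) ^ 2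
  have hP : 0 ≤ P := by positivity
  have hQ : 0 ≤ Q := by positivity
  rw [det_jordan_product, Complex.ofReal_eq_zero,
    sqrt_add_sqrt_eq_one_iff hP hQ (by linarith) (by linarith), div_eq_zero_iff, sub_eq_zero]
  exact or_iff_left (by norm_num)

/-- For strict-type matrices `a = [[t, α], [α̅, 1-t]]` and `b = [[x, y+iz], [y-iz, 1-x]]`,
`det (a ∘ b) = 0` iff the point `(x, y, z)` lies on the ellipsoid with foci
`ã = (t, Re α, Im α)` and `ã' = (1-t, -Re α, -Im α)` and major axis length `1`. -/
theorem stmt18 (t x y z : ℝ) (α : ℂ) (ht0 : 0 < t) (ht1 : t < 1)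
    (hx0 : 0 < x) (hx1 : x < 1)
    (hα : Complex.normSq α < t * (1 - t)) (hyz : y ^ 2 + z ^ 2 < x * (1 - x)) :
    (((2 : ℂ)⁻¹ • (!![(t : ℂ), α; (starRingEnd ℂ) α, 1 - (t : ℂ)] *
        !![(x : ℂ), (y : ℂ) + (z : ℂ) * Complex.I;
           (y : ℂ) - (z : ℂ) * Complex.I, 1 - (x : ℂ)] +
      !![(x : ℂ), (y : ℂ) + (z : ℂ) * Complex.I;
           (y : ℂ) - (z : ℂ) * Complex.I, 1 - (x : ℂ)] *
        !![(t : ℂ), α; (starRingEnd ℂ) α, 1 - (t : ℂ)])).det = 0) ↔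
      Real.sqrt ((x - t) ^ 2 + (y - α.re) ^ 2 + (z - α.im) ^ 2) +
        Real.sqrt ((x - (1 - t)) ^ 2 + (y + α.re) ^ 2 + (z + α.im) ^ 2) = 1 :=
  stmt18_general t x y z α hα hyz
end
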